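/- arXiv:1504.04101 — 5 statements merged into one kernel-verified Lean document; each statement's English description precedes it below -/
import Mathlib

section
/- Let f be a polynomial in n real variables of degree at most 2d lying in the topological interior of the cone Σ_{n,2d} of sums of squares of polynomials of degree at most d. Then there exists a positive definite symmetric N×N real matrix Q (with N = C(d+n, n)) such that f = Xᵀ Q X, where X is the column vector of all monomials in x₁,…,xₙ of degree at most d. Consequently, the Gram spectrahedron of f has affine dimension equal to C(C(d+n,n)+1, 2) − C(2d+n, n). -/
/-!
Write `gramMap X Q` for the polynomial `Xᵀ Q X`. The trace polynomial `Xᵀ X = ∑ x^{2α}` has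
degree at most `2d`, so an interior point `f` of `Σ_{n,2d}` stays a sum of squares after
subtracting `t · Xᵀ X` for some `t > 0`. Writing `f - t · Xᵀ X = ∑ qᵢ²` gives a positive
semidefinite Gram matrix `Q`, and `Q + t • 1` is a positive definite Gram matrix of `f`.

Near a positive definite `Q₀` every `Q₀ + t • P` with `P` symmetric is still positive definite,
so the Gram spectrahedron spans the affine space `Q₀ + {P symmetric | Xᵀ P X = 0}`. Every monomial
of degree at most `2d` is a product of two of degree at most `d`, so `P ↦ Xᵀ P X` maps the
symmetric matrices onto the polynomials of degree at most `2d`, and rank–nullity gives the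
dimension.
-/

open Finset Matrix MvPolynomial Filter Topology

section Gram

variable {σ ι κ R : Type*} [Fintype ι] [Fintype κ] [CommSemiring R]

noncomputable def gramMap (X : ι → σ →₀ ℕ) : Matrix ι ι R →ₗ[R] MvPolynomial σ R where
  toFun Q := ∑ i, ∑ j, monomial (X i + X j) (Q i j)
  map_add' Q Q' := by simp only [Matrix.add_apply, map_add, sum_add_distrib]
  map_smul' r Q := by
    simp only [Matrix.smul_apply, smul_eq_mul, RingHom.id_apply, smul_sum, smul_monomial]

noncomputable def ofCoeffs (Y : κ → σ →₀ ℕ) : (κ → R) →ₗ[R] MvPolynomial σ R where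
  toFun p := ∑ k, monomial (Y k) (p k)
  map_add' p p' := by simp only [Pi.add_apply, map_add, sum_add_distrib]
  map_smul' r p := by
    simp only [Pi.smul_apply, smul_eq_mul, RingHom.id_apply, smul_sum, smul_monomial]

lemma gramMap_single [DecidableEq ι] (X : ι → σ →₀ ℕ) (a b : ι) (r : R) :
    gramMap X (single a b r) = monomial (X a + X b) r := by
  simp [gramMap, single_apply, ite_and, apply_ite (monomial _)]

lemma gramMap_vecMulVec (X : ι → σ →₀ ℕ) (a : ι → R) :
    gramMap X (vecMulVec a a) = ofCoeffs X a ^ 2 := by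
  simp [gramMap, ofCoeffs, vecMulVec_apply, sq, sum_mul_sum, monomial_mul]

lemma coeff_ofCoeffs {Y : κ → σ →₀ ℕ} (hY : Function.Injective Y) (p : κ → R) (k : κ) :
    coeff (Y k) (ofCoeffs Y p) = p k := by
  classical
  simp [ofCoeffs, coeff_sum, coeff_monomial, hY.eq_iff]

lemma coeff_ofCoeffs_of_notMem {Y : κ → σ →₀ ℕ} (p : κ → R) {m : σ →₀ ℕ}
    (hm : m ∉ Set.range Y) :
    coeff m (ofCoeffs Y p) = 0 := by
  classical
  simp only [ofCoeffs, LinearMap.coe_mk, AddHom.coe_mk, coeff_sum, coeff_monomial]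
  exact sum_eq_zero fun k _ => if_neg fun h => hm ⟨k, h⟩

lemma ofCoeffs_injective {Y : κ → σ →₀ ℕ} (hY : Function.Injective Y) :
    Function.Injective (ofCoeffs (R := R) Y) := by
  intro p p' h
  funext k
  rw [← coeff_ofCoeffs hY p k, h, coeff_ofCoeffs hY]

lemma eq_ofCoeffs_of_support_subset {Y : κ → σ →₀ ℕ} (hY : Function.Injective Y)
    {f : MvPolynomial σ R} (hf : ↑f.support ⊆ Set.range Y) :
    f = ofCoeffs Y fun k => coeff (Y k) f := by
  ext m
  by_cases hm : m ∈ Set.range Y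
  · obtain ⟨k, rfl⟩ := hm
    rw [coeff_ofCoeffs hY]
  · rw [coeff_ofCoeffs_of_notMem _ hm, notMem_support_iff.mp fun h => hm (hf h)]

lemma monomial_mem_range_ofCoeffs (Y : κ → σ →₀ ℕ) (k : κ) (r : R) :
    monomial (Y k) r ∈ LinearMap.range (ofCoeffs Y) := by
  classical
  exact ⟨Pi.single k r, by simp [ofCoeffs, Pi.single_apply, apply_ite (monomial _)]⟩

lemma range_gramMap_le_range_ofCoeffs {d : ℕ} {X : ι → σ →₀ ℕ} {Y : κ → σ →₀ ℕ}
    (hX : ∀ i, (X i).degree ≤ d) (hY : {m | m.degree ≤ 2 * d} ⊆ Set.range Y) :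
    LinearMap.range (gramMap (R := R) X) ≤ LinearMap.range (ofCoeffs Y) := by
  rintro _ ⟨Q, rfl⟩
  refine Submodule.sum_mem _ fun i _ => Submodule.sum_mem _ fun j _ => ?_
  obtain ⟨k, hk⟩ : X i + X j ∈ Set.range Y :=
    hY (show (X i + X j).degree ≤ 2 * d by rw [map_add]; linarith [hX i, hX j])
  exact hk ▸ monomial_mem_range_ofCoeffs Y k (Q i j)

end Gram

lemma Finsupp.exists_add_eq_of_degree_le_two_mul {σ : Type*} {d : ℕ} {m : σ →₀ ℕ}
    (hm : m.degree ≤ 2 * d) : ∃ a b : σ →₀ ℕ, a + b = m ∧ a.degree ≤ d ∧ b.degree ≤ d := by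
  obtain ⟨a, ham, ha⟩ := m.exists_le_degree_eq (min d m.degree) (min_le_right _ _)
  obtain ⟨b, rfl⟩ := le_iff_exists_add.mp ham
  rw [map_add] at hm ha
  exact ⟨a, b, rfl, by omega, by omega⟩

lemma Submodule.finrank_inf_ker_add_finrank_map {K V W : Type*} [DivisionRing K]
    [AddCommGroup V] [Module K V] [AddCommGroup W] [Module K W] (p : Submodule K V)
    [FiniteDimensional K p] (L : V →ₗ[K] W) :
    Module.finrank K ↥(p ⊓ LinearMap.ker L) + Module.finrank K ↥(p.map L) =
      Module.finrank K p := by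
  rw [← map_comap_subtype, finrank_map_subtype_eq, ← LinearMap.ker_domRestrict,
    ← LinearMap.range_domRestrict, add_comm]
  exact (L.domRestrict p).finrank_range_add_finrank_ker

lemma eventually_add_smul_mem_of_mem_interior {E : Type*} [AddCommGroup E] [Module ℝ E]
    [TopologicalSpace E] [ContinuousAdd E] [ContinuousSMul ℝ E] {s : Set E} {c : E}
    (hc : c ∈ interior s) (v : E) : ∀ᶠ t in 𝓝 (0 : ℝ), c + t • v ∈ s := by
  have : Tendsto (fun t : ℝ => c + t • v) (𝓝 0) (𝓝 c) := by
    simpa using ((continuous_id.smul continuous_const).const_add c).tendsto (0 : ℝ)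
  exact this.eventually (mem_interior_iff_mem_nhds.mp hc)

lemma mem_selfAdjoint_submodule_iff_isHermitian {ι : Type*} {A : Matrix ι ι ℝ} :
    A ∈ selfAdjoint.submodule ℝ (Matrix ι ι ℝ) ↔ A.IsHermitian :=
  Iff.rfl

section PosDef

variable {ι : Type*} [Fintype ι]

noncomputable def selfAdjointMatrixEquivSym2 :
    selfAdjoint.submodule ℝ (Matrix ι ι ℝ) ≃ₗ[ℝ] (Sym2 ι → ℝ) where
  toFun A := Sym2.lift ⟨fun i j => (A : Matrix ι ι ℝ) i j, fun i j => by
    simpa using ((mem_selfAdjoint_submodule_iff_isHermitian.mp A.2).apply i j).symm⟩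
  map_add' A B := by ext ⟨i, j⟩; simp
  map_smul' r A := by ext ⟨i, j⟩; simp
  invFun f := ⟨of fun i j => f s(i, j), by
    rw [mem_selfAdjoint_submodule_iff_isHermitian]
    ext i j
    simp [Sym2.eq_swap]⟩
  left_inv A := by ext i j; simp
  right_inv f := by ext ⟨i, j⟩; simp

lemma finrank_selfAdjoint_submodule_matrix :
    Module.finrank ℝ (selfAdjoint.submodule ℝ (Matrix ι ι ℝ)) =
      (Fintype.card ι + 1).choose 2 := by
  classical
  rw [selfAdjointMatrixEquivSym2.finrank_eq, Module.finrank_fintype_fun_eq_card, Sym2.card]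

lemma Matrix.PosDef.eventually_posDef_add_smul {Q P : Matrix ι ι ℝ} (hQ : Q.PosDef)
    (hP : P.IsHermitian) : ∀ᶠ t in 𝓝 (0 : ℝ), (Q + t • P).PosDef := by
  have hF : Continuous fun z : ℝ × (ι → ℝ) => z.2 ⬝ᵥ ((Q + z.1 • P) *ᵥ z.2) := by
    fun_prop
  -- positivity on the compact unit sphere persists uniformly for small `t`
  have hsphere : ∀ᶠ t in 𝓝 (0 : ℝ), ∀ x ∈ Metric.sphere (0 : ι → ℝ) 1,
      0 < x ⬝ᵥ ((Q + t • P) *ᵥ x) := by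
    refine (isCompact_sphere 0 1).eventually_forall_of_forall_eventually fun x hx => ?_
    refine continuousAt_const.eventually_lt hF.continuousAt ?_
    simpa using hQ.dotProduct_mulVec_pos (ne_zero_of_mem_sphere one_ne_zero ⟨x, hx⟩)
  filter_upwards [hsphere] with t ht
  refine .of_dotProduct_mulVec_pos (hQ.isHermitian.add (hP.smul (IsSelfAdjoint.all t)))
    fun x hx => ?_
  have hx' : ‖x‖ ≠ 0 := norm_ne_zero_iff.mpr hx
  have := ht (‖x‖⁻¹ • x) (by simp [norm_smul, hx'])
  rw [mulVec_smul, smul_dotProduct, dotProduct_smul, smul_smul, smul_eq_mul] at this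
  rw [star_trivial]
  exact pos_of_mul_pos_right this (by positivity)

lemma vectorSpan_setOf_posSemidef_and_eq {V : Type*} [AddCommGroup V] [Module ℝ V]
    (L : Matrix ι ι ℝ →ₗ[ℝ] V) {Q₀ : Matrix ι ι ℝ} (hQ₀ : Q₀.PosDef) :
    vectorSpan ℝ {Q | Q.PosSemidef ∧ L Q₀ = L Q} =
      selfAdjoint.submodule ℝ (Matrix ι ι ℝ) ⊓ LinearMap.ker L := by
  apply le_antisymm
  · rw [vectorSpan, Submodule.span_le]
    rintro _ ⟨Q₁, ⟨hQ₁, hL₁⟩, Q₂, ⟨hQ₂, hL₂⟩, rfl⟩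
    refine ⟨mem_selfAdjoint_submodule_iff_isHermitian.mpr (hQ₁.isHermitian.sub hQ₂.isHermitian),
      ?_⟩
    simp [vsub_eq_sub, map_sub, ← hL₁, ← hL₂]
  · rintro P ⟨hP, hLP⟩
    obtain ⟨t, ht, hpos⟩ := (hQ₀.eventually_posDef_add_smul
      (mem_selfAdjoint_submodule_iff_isHermitian.mp hP)).exists_gt
    have hmem : Q₀ + t • P ∈ {Q | Q.PosSemidef ∧ L Q₀ = L Q} :=
      ⟨hpos.posSemidef, by simp [LinearMap.mem_ker.mp hLP]⟩
    have : t • P ∈ vectorSpan ℝ {Q | Q.PosSemidef ∧ L Q₀ = L Q} := by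
      simpa using vsub_mem_vectorSpan ℝ hmem ⟨hQ₀.posSemidef, rfl⟩
    exact (Submodule.smul_mem_iff _ ht.ne').mp this

end PosDef

section GramReal

variable {σ ι κ : Type*} [Fintype ι] [Fintype κ] {d : ℕ}

lemma range_ofCoeffs_le_map_gramMap {X : ι → σ →₀ ℕ} {Y : κ → σ →₀ ℕ}
    (hX : {m | m.degree ≤ d} ⊆ Set.range X) (hY : ∀ k, (Y k).degree ≤ 2 * d) :
    LinearMap.range (ofCoeffs (R := ℝ) Y) ≤
      (selfAdjoint.submodule ℝ (Matrix ι ι ℝ)).map (gramMap X) := by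
  classical
  rintro _ ⟨p, rfl⟩
  refine Submodule.sum_mem _ fun k _ => ?_
  obtain ⟨a, b, hab, ha, hb⟩ := Finsupp.exists_add_eq_of_degree_le_two_mul (hY k)
  obtain ⟨i, rfl⟩ := hX ha
  obtain ⟨j, rfl⟩ := hX hb
  refine ⟨single i j (p k / 2) + single j i (p k / 2), ?_, ?_⟩
  · rw [SetLike.mem_coe, mem_selfAdjoint_submodule_iff_isHermitian, IsHermitian,
      conjTranspose_add, conjTranspose_single, conjTranspose_single, star_trivial, add_comm]
  · rw [map_add, gramMap_single, gramMap_single, add_comm (X j), ← map_add, add_halves, hab]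

lemma exists_posSemidef_gramMap_eq_sum_sq {X : ι → σ →₀ ℕ} (hXinj : Function.Injective X)
    (hX : {m | m.degree ≤ d} ⊆ Set.range X) {k : ℕ} (q : Fin k → MvPolynomial σ ℝ)
    (hq : ∀ i, (q i).totalDegree ≤ d) :
    ∃ Q : Matrix ι ι ℝ, Q.PosSemidef ∧ gramMap X Q = ∑ i, q i ^ 2 := by
  have hsupp : ∀ i, ↑(q i).support ⊆ Set.range X := fun i m hm =>
    hX ((le_totalDegree hm).trans (hq i))
  refine ⟨∑ i, vecMulVec (fun l => coeff (X l) (q i)) (fun l => coeff (X l) (q i)),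
    posSemidef_sum _ fun i _ => posSemidef_vecMulVec_self_star _, ?_⟩
  rw [map_sum]
  refine sum_congr rfl fun i _ => ?_
  rw [gramMap_vecMulVec, ← eq_ofCoeffs_of_support_subset hXinj (hsupp i)]

/-- The cone `Σ_{n,2d}`, in the coordinates given by the monomials `Y`. -/
def sosCoeffs (Y : κ → σ →₀ ℕ) (d : ℕ) : Set (κ → ℝ) :=
  {p | ∃ (k : ℕ) (q : Fin k → MvPolynomial σ ℝ),
    (∀ i, (q i).totalDegree ≤ d) ∧ ofCoeffs Y p = ∑ i, q i ^ 2}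

lemma exists_posDef_gramMap_eq_of_mem_interior {X : ι → σ →₀ ℕ} {Y : κ → σ →₀ ℕ}
    (hXinj : Function.Injective X) (hX : Set.range X = {m | m.degree ≤ d})
    (hY : {m | m.degree ≤ 2 * d} ⊆ Set.range Y) {c : κ → ℝ}
    (hc : c ∈ interior (sosCoeffs Y d)) :
    ∃ Q : Matrix ι ι ℝ, Q.PosDef ∧ ofCoeffs Y c = gramMap X Q := by
  classical
  obtain ⟨e, he⟩ : gramMap X (1 : Matrix ι ι ℝ) ∈ LinearMap.range (ofCoeffs Y) :=
    range_gramMap_le_range_ofCoeffs (fun i => hX.le ⟨i, rfl⟩) hY ⟨1, rfl⟩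
  obtain ⟨t, ht, k, q, hq, hsum⟩ := (eventually_add_smul_mem_of_mem_interior hc (-e)).exists_gt
  obtain ⟨Q, hQ, hQq⟩ := exists_posSemidef_gramMap_eq_sum_sq hXinj hX.ge q hq
  refine ⟨Q + t • 1, PosDef.posSemidef_add hQ (PosDef.one.smul ht), ?_⟩
  calc ofCoeffs Y c = ofCoeffs Y (c + t • -e) + t • ofCoeffs Y e := by
        rw [map_add, map_smul, map_neg, smul_neg, neg_add_cancel_right]
    _ = gramMap X (Q + t • 1) := by rw [hsum, ← hQq, he, map_add, map_smul]

end GramReal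

/-- If `f` (a polynomial in `n` variables of degree at most `2d`, represented by
its coefficient vector `c` relative to an enumeration `Y` of all monomials of degree at most
`2d`) lies in the topological interior of the cone `Σ_{n,2d}` of sums of squares of polynomials
of degree at most `d`, then `f` admits a positive definite symmetric Gram matrix `Q` of size
`N = C(d+n, n)` (so `f = Xᵀ Q X`, with `X` an enumeration of the monomials of degree at most
`d`), and consequently the affine dimension of the Gram spectrahedron of `f` equals
`C(C(d+n,n)+1, 2) − C(2d+n, n)`. -/
theorem stmt_1 (n d : ℕ)
    (X : Fin ((d + n).choose n) → (Fin n →₀ ℕ))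
    (hXinj : Function.Injective X)
    (hXrange : Set.range X = {m : Fin n →₀ ℕ | (m.sum fun _ e => e) ≤ d})
    (Y : Fin ((2 * d + n).choose n) → (Fin n →₀ ℕ))
    (hYinj : Function.Injective Y)
    (hYrange : Set.range Y = {m : Fin n →₀ ℕ | (m.sum fun _ e => e) ≤ 2 * d})
    (c : Fin ((2 * d + n).choose n) → ℝ)
    (hc : c ∈ interior {p : Fin ((2 * d + n).choose n) → ℝ |
          ∃ (k : ℕ) (q : Fin k → MvPolynomial (Fin n) ℝ),
            (∀ i, (q i).totalDegree ≤ d) ∧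
            (∑ j, MvPolynomial.monomial (Y j) (p j)) = ∑ i, q i ^ 2}) :
    (∃ Q : Matrix (Fin ((d + n).choose n)) (Fin ((d + n).choose n)) ℝ,
        Q.PosDef ∧
        (∑ j, MvPolynomial.monomial (Y j) (c j)) =
          ∑ i : Fin ((d + n).choose n), ∑ j : Fin ((d + n).choose n),
            MvPolynomial.monomial (X i + X j) (Q i j)) ∧
    Module.finrank ℝ
      (affineSpan ℝ
        {Q : Matrix (Fin ((d + n).choose n)) (Fin ((d + n).choose n)) ℝ |
          Q.PosSemidef ∧
          (∑ j, MvPolynomial.monomial (Y j) (c j)) =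
            ∑ i : Fin ((d + n).choose n), ∑ j : Fin ((d + n).choose n),
              MvPolynomial.monomial (X i + X j) (Q i j)}).direction =
      ((d + n).choose n + 1).choose 2 - (2 * d + n).choose n := by
  obtain ⟨Q₀, hQ₀, hf⟩ := exists_posDef_gramMap_eq_of_mem_interior hXinj hXrange hYrange.ge hc
  refine ⟨⟨Q₀, hQ₀, hf⟩, ?_⟩
  have himage : (selfAdjoint.submodule ℝ _).map (gramMap X) = LinearMap.range (ofCoeffs Y) :=
    le_antisymm
      ((LinearMap.map_le_range).trans
        (range_gramMap_le_range_ofCoeffs (fun i => hXrange.le ⟨i, rfl⟩) hYrange.ge))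
      (range_ofCoeffs_le_map_gramMap hXrange.ge fun k => hYrange.le ⟨k, rfl⟩)
  have hrank := (selfAdjoint.submodule ℝ _).finrank_inf_ker_add_finrank_map (gramMap X)
  rw [himage, LinearMap.finrank_range_of_inj (ofCoeffs_injective hYinj),
    finrank_selfAdjoint_submodule_matrix, Fintype.card_fin, Module.finrank_fin_fun] at hrank
  change Module.finrank ℝ
    (affineSpan ℝ {Q | Q.PosSemidef ∧ ofCoeffs Y c = gramMap X Q}).direction = _
  rw [direction_affineSpan, hf, vectorSpan_setOf_posSemidef_and_eq _ hQ₀]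
  omega
end

section
/- Let f be a univariate real polynomial of degree 2d that is strictly positive on all of ℝ. Then f lies in the topological interior of the cone of nonnegative polynomials of degree at most 2d (equivalently, of the cone of sums of squares of degree at most 2d), inside the real vector space of polynomials of degree at most 2d. -/
/-!
If `f = ∑ cᵢ xⁱ` has even degree `n`, then `f(x) = xⁿ g(1/x)` for the reversed polynomial
`g(t) = ∑ cᵢ tⁿ⁻ⁱ`, so `f > 0` on `ℝ` as soon as `f > 0` and `g > 0` on `[-1, 1]`. These two
conditions hold for a positive `f` (at `t = 0`, `g` is the top coefficient, which is `≥ 0` by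
continuity and `≠ 0` by assumption), and they are open in the coefficients because `[-1, 1]` is
compact.

A nonnegative polynomial `p` with minimum `μ` at `x₀` has `p - μ` vanishing to second order at
`x₀`, so `p = (X - x₀)² q + μ` with `q ≥ 0` of smaller degree; induction makes `p` a sum of
squares.
-/

open Polynomial Finset Filter Topology Set

theorem IsSumSq.exists_fin_sum_sq {R : Type*} [CommSemiring R] {s : R} (hs : IsSumSq s) :
    ∃ (m : ℕ) (q : Fin m → R), s = ∑ i, q i ^ 2 := by
  induction hs with
  | zero => exact ⟨0, Fin.elim0, by simp⟩
  | sq_add a _ ih =>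
    obtain ⟨m, q, rfl⟩ := ih
    exact ⟨m + 1, Fin.cons a q, by simp [Fin.sum_univ_succ, sq]⟩

theorem ContinuousAt.le_of_forall_ne {X α : Type*} [TopologicalSpace X] [TopologicalSpace α]
    [Preorder α] [ClosedIciTopology α] {f : X → α} {a : X} [(𝓝[≠] a).NeBot] {b : α}
    (hf : ContinuousAt f a) (h : ∀ x ≠ a, b ≤ f x) : b ≤ f a :=
  ge_of_tendsto (hf.tendsto.mono_left nhdsWithin_le_nhds)
    (eventually_nhdsWithin_of_forall (s := {a}ᶜ) h)

namespace Polynomial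

theorem sq_X_sub_C_dvd_sub_C_eval_of_isMinOn {p : ℝ[X]} {x₀ : ℝ}
    (hmin : IsMinOn (fun x => p.eval x) univ x₀) : (X - C x₀) ^ 2 ∣ p - C (p.eval x₀) := by
  set g := p - C (p.eval x₀)
  rcases eq_or_ne g 0 with hg | hg
  · rw [hg]; exact dvd_zero _
  have hroot : g.IsRoot x₀ := by simp [g]
  have hcrit : (derivative g).IsRoot x₀ := by
    simpa [g, Polynomial.deriv] using (hmin.isLocalMin univ_mem).deriv_eq_zero
  exact (le_rootMultiplicity_iff hg).1 ((one_lt_rootMultiplicity_iff_isRoot hg).2 ⟨hroot, hcrit⟩)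

theorem exists_eq_sq_mul_add_of_isMinOn {p : ℝ[X]} {x₀ : ℝ}
    (hmin : IsMinOn (fun x => p.eval x) univ x₀) :
    ∃ q : ℝ[X], p = (X - C x₀) ^ 2 * q + C (p.eval x₀) ∧ ∀ x, 0 ≤ q.eval x := by
  obtain ⟨q, hq⟩ := sq_X_sub_C_dvd_sub_C_eval_of_isMinOn hmin
  have hpq : p = (X - C x₀) ^ 2 * q + C (p.eval x₀) := by rw [← hq]; ring
  have hne : ∀ y ≠ x₀, 0 ≤ q.eval y := fun y hy => by
    have hdiff : 0 ≤ (y - x₀) ^ 2 * q.eval y := by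
      have := isMinOn_univ_iff.1 hmin y
      rw [hpq] at this
      simpa using this
    exact nonneg_of_mul_nonneg_right hdiff (even_two.pow_pos (sub_ne_zero.2 hy))
  refine ⟨q, hpq, fun x => ?_⟩
  rcases eq_or_ne x x₀ with rfl | hx
  exacts [q.continuous.continuousAt.le_of_forall_ne hne, hne x hx]

theorem isSumSq_of_forall_eval_nonneg (p : ℝ[X]) (hp : ∀ x, 0 ≤ p.eval x) : IsSumSq p := by
  induction hn : p.natDegree using Nat.strong_induction_on generalizing p with
  | _ n ih =>
  have hC : ∀ a : ℝ, 0 ≤ a → IsSumSq (C a) := fun a ha => by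
    simpa [← C_mul, Real.mul_self_sqrt ha] using IsSumSq.mul_self (C √a)
  obtain ⟨x₀, hx₀⟩ := p.exists_forall_norm_le
  have hmin : IsMinOn (fun x => p.eval x) univ x₀ := fun y _ => by
    simpa [Real.norm_eq_abs, abs_of_nonneg (hp _)] using hx₀ y
  obtain ⟨q, hpq, hq⟩ := exists_eq_sq_mul_add_of_isMinOn hmin
  rcases eq_or_ne q 0 with rfl | hq0
  · rw [hpq, mul_zero, zero_add]; exact hC _ (hp x₀)
  have hdeg : q.natDegree < n := by
    rw [← hn, hpq, natDegree_add_C, natDegree_mul (pow_ne_zero 2 (X_sub_C_ne_zero x₀)) hq0,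
      natDegree_pow, natDegree_X_sub_C]
    omega
  rw [hpq]
  exact ((IsSquare.sq _).isSumSq.mul (ih _ hdeg q hq rfl)).add (hC _ (hp x₀))

end Polynomial

theorem IsCompact.isOpen_setOf_forall_pos {X Y : Type*} [TopologicalSpace X] [TopologicalSpace Y]
    {K : Set Y} (hK : IsCompact K) {Φ : X → Y → ℝ} (hΦ : Continuous (Function.uncurry Φ)) :
    IsOpen {x | ∀ y ∈ K, 0 < Φ x y} :=
  isOpen_iff_eventually.2 fun _ hx => hK.eventually_forall_of_forall_eventually
    fun y hy => hΦ.continuousAt.eventually (lt_mem_nhds (hx y hy))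

section CoefficientVector

variable {K : Type*} [Field K] {n : ℕ}

theorem sum_mul_pow_eq_pow_mul_sum_mul_inv_pow (p : Fin (n + 1) → K) {x : K} (hx : x ≠ 0) :
    ∑ i : Fin (n + 1), p i * x ^ (i : ℕ) = x ^ n * ∑ i : Fin (n + 1), p i * x⁻¹ ^ (n - i) := by
  rw [mul_sum]
  refine sum_congr rfl fun i _ => ?_
  have hsplit : x ^ n = x ^ (i : ℕ) * x ^ (n - i) := by
    rw [← pow_add, Nat.add_sub_cancel' i.is_le]
  rw [hsplit, inv_pow]
  field_simp

theorem sum_mul_zero_pow_sub (p : Fin (n + 1) → K) :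
    ∑ i : Fin (n + 1), p i * 0 ^ (n - i) = p (Fin.last n) := by
  simp [Fin.sum_univ_castSucc, Nat.sub_ne_zero_of_lt]

end CoefficientVector

section RealCoefficientVector

variable {n : ℕ}

theorem sum_mul_pow_pos_of_forall_mem_Icc (hn : Even n) {p : Fin (n + 1) → ℝ}
    (hsmall : ∀ x ∈ Icc (-1 : ℝ) 1, 0 < ∑ i : Fin (n + 1), p i * x ^ (i : ℕ))
    (hlarge : ∀ t ∈ Icc (-1 : ℝ) 1, 0 < ∑ i : Fin (n + 1), p i * t ^ (n - i)) (x : ℝ) :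
    0 < ∑ i : Fin (n + 1), p i * x ^ (i : ℕ) := by
  rcases le_or_gt |x| 1 with hx | hx
  · exact hsmall x (abs_le.1 hx)
  have hx0 : x ≠ 0 := by rintro rfl; norm_num at hx
  have hinv : x⁻¹ ∈ Icc (-1 : ℝ) 1 :=
    abs_le.1 (by rw [abs_inv]; exact inv_le_one_of_one_le₀ hx.le)
  rw [sum_mul_pow_eq_pow_mul_sum_mul_inv_pow p hx0]
  exact mul_pos (hn.pow_pos hx0) (hlarge _ hinv)

theorem sum_mul_pow_sub_pos (hn : Even n) {c : Fin (n + 1) → ℝ} (hc : c (Fin.last n) ≠ 0)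
    (hpos : ∀ x : ℝ, 0 < ∑ i : Fin (n + 1), c i * x ^ (i : ℕ)) (t : ℝ) :
    0 < ∑ i : Fin (n + 1), c i * t ^ (n - i) := by
  have hne : ∀ t ≠ 0, 0 < ∑ i : Fin (n + 1), c i * t ^ (n - i) := fun t ht => by
    have := hpos t⁻¹
    rw [sum_mul_pow_eq_pow_mul_sum_mul_inv_pow c (inv_ne_zero ht), inv_inv] at this
    exact pos_of_mul_pos_right this (hn.pow_nonneg _)
  rcases eq_or_ne t 0 with rfl | ht
  · have hcont : Continuous fun t : ℝ => ∑ i : Fin (n + 1), c i * t ^ (n - i) := by fun_prop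
    refine (hcont.continuousAt.le_of_forall_ne fun t ht => (hne t ht).le).lt_of_ne ?_
    rw [sum_mul_zero_pow_sub]
    exact hc.symm
  · exact hne t ht

theorem mem_interior_setOf_forall_sum_mul_pow_pos (hn : Even n) {c : Fin (n + 1) → ℝ}
    (hc : c (Fin.last n) ≠ 0) (hpos : ∀ x : ℝ, 0 < ∑ i : Fin (n + 1), c i * x ^ (i : ℕ)) :
    c ∈ interior {p : Fin (n + 1) → ℝ | ∀ x : ℝ, 0 < ∑ i : Fin (n + 1), p i * x ^ (i : ℕ)} := by
  have hopen : ∀ e : Fin (n + 1) → ℕ,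
      IsOpen {p : Fin (n + 1) → ℝ | ∀ x ∈ Icc (-1 : ℝ) 1, 0 < ∑ i, p i * x ^ e i} :=
    fun e => isCompact_Icc.isOpen_setOf_forall_pos (by fun_prop)
  refine interior_maximal (fun p hp => sum_mul_pow_pos_of_forall_mem_Icc hn hp.1 hp.2)
    ((hopen _).inter (hopen fun i => n - i))
    ⟨fun x _ => hpos x, fun t _ => sum_mul_pow_sub_pos hn hc hpos t⟩

end RealCoefficientVector

/-- A univariate real polynomial of degree exactly `2d` (represented by its
coefficient vector `c ∈ ℝ^{2d+1}`, with nonzero top coefficient) that is strictly positive on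
`ℝ` lies in the topological interior of the cone of nonnegative polynomials of degree at most
`2d`, and equivalently in the interior of the cone of sums of squares, inside the
`(2d+1)`-dimensional vector space of polynomials of degree at most `2d`. -/
theorem stmt_4 (d : ℕ) (c : Fin (2 * d + 1) → ℝ)
    (hdeg : c (Fin.last (2 * d)) ≠ 0)
    (hpos : ∀ x : ℝ, 0 < ∑ i : Fin (2 * d + 1), c i * x ^ (i : ℕ)) :
    c ∈ interior {p : Fin (2 * d + 1) → ℝ |
          ∀ x : ℝ, 0 ≤ ∑ i : Fin (2 * d + 1), p i * x ^ (i : ℕ)} ∧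
    c ∈ interior {p : Fin (2 * d + 1) → ℝ |
          ∃ (m : ℕ) (q : Fin m → Polynomial ℝ),
            (∑ i : Fin (2 * d + 1), C (p i) * X ^ (i : ℕ)) = ∑ i, q i ^ 2} := by
  have hnonneg := interior_mono (fun p hp x => (hp x).le)
    (mem_interior_setOf_forall_sum_mul_pow_pos (even_two_mul d) hdeg hpos)
  refine ⟨hnonneg, interior_mono (fun p hp => ?_) hnonneg⟩
  refine (Polynomial.isSumSq_of_forall_eval_nonneg _ fun x => ?_).exists_fin_sum_sq
  simpa [eval_finsetSum] using hp x
end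

section
/- Let f be a univariate real polynomial of degree 2d that is strictly positive on ℝ. Then the Gram spectrahedron of f, i.e. the set of positive semidefinite real symmetric (d+1)×(d+1) matrices Q with f = Xᵀ Q X where X = (1, x, …, x^d)ᵀ, is a convex set whose affine span has dimension C(d, 2) = d(d−1)/2. -/
/-!
The Gram matrices of `f` form an affine space `Q₀ + N`, where `N` is the space of symmetric
matrices representing `0`. The map `Q ↦ Xᵀ Q X` sends the `C(d + 2, 2)`-dimensional space of
symmetric matrices onto the `(2d + 1)`-dimensional space of polynomials of degree `≤ 2d`, so
`dim N = C(d + 2, 2) - (2d + 1) = C(d, 2)`.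

Strict positivity makes the spectrahedron full-dimensional in `Q₀ + N`: for small `ε > 0` the
polynomial `f - ε ∑ᵢ x²ⁱ` is still positive, hence a sum of two squares `p² + q²`, and then
`ε • 1 + p pᵀ + q qᵀ` is a Gram matrix of `f` that stays positive semidefinite after a small move in
any direction of `N`.
-/

open Polynomial Finset

/-- The Gram spectrahedron of a univariate real polynomial `g` of degree at most `2m`:
the set of positive semidefinite real symmetric `(m+1) × (m+1)` matrices `Q` with
`g = Xᵀ Q X`, where `X = (1, x, …, x^m)ᵀ`. -/
def GramS (m : ℕ) (g : Polynomial ℝ) : Set (Matrix (Fin (m + 1)) (Fin (m + 1)) ℝ) :=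
  {Q | Q.PosSemidef ∧
    g = ∑ i : Fin (m + 1), ∑ j : Fin (m + 1), C (Q i j) * X ^ ((i : ℕ) + (j : ℕ))}

open Matrix Filter Topology Asymptotics

theorem exists_pos_le_of_tendsto_cocompact {β : Type*} [TopologicalSpace β] [Nonempty β]
    {h : β → ℝ} (hc : Continuous h) (hpos : ∀ x, 0 < h x) {L : ℝ} (hL : 0 < L)
    (ht : Tendsto h (cocompact β) (𝓝 L)) : ∃ ε > 0, ∀ x, ε ≤ h x := by
  -- `min h (L / 2)` is constant off a compact set, so it attains its minimum
  have hev : ∀ᶠ x in cocompact β, L / 2 ≤ h x := ht.eventually (eventually_ge_nhds (by linarith))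
  have hmin : Continuous fun x => min (h x) (L / 2) := hc.min continuous_const
  obtain ⟨x₀, hx₀⟩ := hmin.exists_forall_le' (Classical.arbitrary β)
    (hev.mono fun x hx => by rw [min_eq_right hx]; exact min_le_right _ _)
  exact ⟨min (h x₀) (L / 2), lt_min (hpos x₀) (by linarith),
    fun x => (hx₀ x).trans (min_le_left _ _)⟩

open Unitary ComplexOrder in
theorem Matrix.IsHermitian.exists_pos_posSemidef_one_add_smul {𝕜 n : Type*} [RCLike 𝕜]
    [Fintype n] [DecidableEq n] {B : Matrix n n 𝕜} (hB : B.IsHermitian) :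
    ∃ t : ℝ, 0 < t ∧ (1 + t • B).PosSemidef := by
  set U := hB.eigenvectorUnitary
  set μ := hB.eigenvalues
  set t := 1 / (1 + ∑ i, |μ i|) with ht
  have htpos : 0 < t := by positivity
  refine ⟨t, htpos, ?_⟩
  -- in an eigenbasis of `B`, `1 + t • B` is diagonal with entries `1 + t μᵢ ≥ 1 - t |μᵢ| ≥ 0`
  have hdiag :
      1 + t • B = conjStarAlgAut ℝ _ U (diagonal fun i => ((1 + t * μ i : ℝ) : 𝕜)) := by
    have hB' : B = conjStarAlgAut ℝ _ U (diagonal (RCLike.ofReal ∘ μ)) := hB.spectral_theorem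
    rw [hB', ← map_one (conjStarAlgAut ℝ _ U), ← map_smul, ← map_add]
    congr 1
    ext i j
    by_cases h : i = j <;> simp [h, RCLike.real_smul_eq_coe_mul]
  rw [hdiag, conjStarAlgAut_apply, isUnit_coe.posSemidef_star_right_conjugate_iff,
    posSemidef_diagonal_iff]
  intro i
  have hle : |μ i| ≤ ∑ j, |μ j| :=
    single_le_sum (f := fun j => |μ j|) (fun _ _ => abs_nonneg _) (mem_univ i)
  have : t * |μ i| ≤ 1 := by
    rw [ht, div_mul_eq_mul_div, one_mul, div_le_one (by positivity)]
    linarith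
  have := mul_le_mul_of_nonneg_left (neg_abs_le (μ i)) htpos.le
  exact RCLike.ofReal_nonneg.mpr (by linarith)

namespace Polynomial

theorem two_mul_natDegree_le_natDegree_sq_add_sq {R : Type*} [CommRing R] [LinearOrder R]
    [IsStrictOrderedRing R] (p q : R[X]) : 2 * p.natDegree ≤ (p ^ 2 + q ^ 2).natDegree := by
  wlog hqp : q.natDegree ≤ p.natDegree generalizing p q
  · have := this q p (by omega)
    rw [add_comm] at this
    omega
  rcases eq_or_ne p 0 with rfl | hp
  · simp
  apply le_natDegree_of_ne_zero
  rw [coeff_add, coeff_pow_of_natDegree_le le_rfl, coeff_pow_of_natDegree_le hqp]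
  have := leadingCoeff_ne_zero.mpr hp
  positivity

theorem exists_quadratic_mul_of_forall_eval_ne_zero {f : ℝ[X]} (hdeg : 0 < f.natDegree)
    (hf : ∀ x, f.eval x ≠ 0) :
    ∃ (a b : ℝ) (g : ℝ[X]), f = ((X - C a) ^ 2 + C b ^ 2) * g ∧ g.natDegree < f.natDegree := by
  obtain ⟨z, hz⟩ :=
    IsAlgClosed.exists_aeval_eq_zero ℂ f (natDegree_pos_iff_degree_pos.mp hdeg).ne'
  have him : z.im ≠ 0 := by
    intro him
    have hre : z = algebraMap ℝ ℂ z.re := Complex.ext rfl (by simp [him])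
    rw [hre, aeval_algebraMap_apply_eq_algebraMap_eval] at hz
    exact hf z.re (by simpa using hz)
  obtain ⟨g, hg⟩ := f.quadratic_dvd_of_aeval_eq_zero_im_ne_zero hz him
  have hquad :
      (X ^ 2 - C (2 * z.re) * X + C (‖z‖ ^ 2) : ℝ[X]) = (X - C z.re) ^ 2 + C z.im ^ 2 := by
    rw [Complex.sq_norm, Complex.normSq_apply]
    simp only [map_add, map_mul, map_ofNat]
    ring
  have hquad2 : (X ^ 2 - C (2 * z.re) * X + C (‖z‖ ^ 2) : ℝ[X]).natDegree = 2 := by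
    compute_degree!
  have hg0 : g ≠ 0 := by
    rintro rfl
    simp_all
  refine ⟨z.re, z.im, g, hquad ▸ hg, ?_⟩
  rw [hg, natDegree_mul (ne_zero_of_natDegree_gt (n := 0) (by omega)) hg0]
  omega

theorem exists_eq_sq_add_sq_of_forall_eval_pos {f : ℝ[X]} (hf : ∀ x, 0 < f.eval x) :
    ∃ p q : ℝ[X], f = p ^ 2 + q ^ 2 := by
  induction hn : f.natDegree using Nat.strong_induction_on generalizing f with
  | _ n ih =>
  rcases Nat.eq_zero_or_pos n with rfl | hpos
  · rw [eq_C_of_natDegree_eq_zero hn]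
    have : 0 < f.coeff 0 := by simpa [eval_eq_sum_range, hn] using hf 0
    exact ⟨C √(f.coeff 0), 0, by rw [← C_pow, Real.sq_sqrt this.le]; simp⟩
  obtain ⟨a, b, g, rfl, hlt⟩ :=
    exists_quadratic_mul_of_forall_eval_ne_zero (hn ▸ hpos) fun x => (hf x).ne'
  have hg : ∀ x, 0 < g.eval x := fun x =>
    pos_of_mul_pos_right (eval_mul (p := (X - C a) ^ 2 + C b ^ 2) ▸ hf x) (by simp; positivity)
  obtain ⟨p, q, rfl⟩ := ih _ (hn ▸ hlt) hg rfl
  -- the two-square identity `(u² + v²)(p² + q²) = (up - vq)² + (vp + uq)²`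
  exact ⟨(X - C a) * p - C b * q, C b * p + (X - C a) * q, by ring⟩

theorem isEquivalent_cocompact_lead (P : ℝ[X]) :
    (fun x => P.eval x) ~[cocompact ℝ] fun x => P.leadingCoeff * x ^ P.natDegree := by
  rw [cocompact_eq_atBot_atTop]
  exact P.isEquivalent_atBot_lead.sup P.isEquivalent_atTop_lead

theorem tendsto_eval_div_eval_cocompact {P Q : ℝ[X]} (hdeg : P.natDegree = Q.natDegree) :
    Tendsto (fun x => P.eval x / Q.eval x) (cocompact ℝ)
      (𝓝 (P.leadingCoeff / Q.leadingCoeff)) := by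
  refine (P.isEquivalent_cocompact_lead.div Q.isEquivalent_cocompact_lead).symm.tendsto_nhds ?_
  refine tendsto_const_nhds.congr' ?_
  filter_upwards [(isCompact_singleton : IsCompact {(0 : ℝ)}).compl_mem_cocompact] with x hx
  have : x ^ Q.natDegree ≠ 0 := pow_ne_zero _ hx
  simp only [Pi.div_apply, hdeg]
  field_simp

theorem exists_pos_mul_eval_lt {P Q : ℝ[X]} (hdeg : P.natDegree = Q.natDegree)
    (hP : ∀ x, 0 < P.eval x) (hQ : ∀ x, 0 < Q.eval x) :
    ∃ ε > 0, ∀ x, ε * Q.eval x < P.eval x := by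
  have hP0 : P ≠ 0 := fun h => by simpa [h] using hP 0
  have hQ0 : Q ≠ 0 := fun h => by simpa [h] using hQ 0
  have ht := tendsto_eval_div_eval_cocompact hdeg
  have hL : 0 < P.leadingCoeff / Q.leadingCoeff :=
    (ge_of_tendsto' ht fun x => (div_pos (hP x) (hQ x)).le).lt_of_ne
      (div_ne_zero (leadingCoeff_ne_zero.mpr hP0) (leadingCoeff_ne_zero.mpr hQ0)).symm
  obtain ⟨ε, hε, hle⟩ := exists_pos_le_of_tendsto_cocompact
    (P.continuous.div Q.continuous fun x => (hQ x).ne') (fun x => div_pos (hP x) (hQ x)) hL ht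
  refine ⟨ε / 2, half_pos hε, fun x => ?_⟩
  have := (le_div_iff₀ (hQ x)).mp (hle x)
  nlinarith [hQ x]

end Polynomial

section GramPoly

variable {R : Type*} [CommSemiring R] {n m : ℕ}

noncomputable def gramPoly (n : ℕ) : Matrix (Fin n) (Fin n) R →ₗ[R] R[X] where
  toFun Q := ∑ i, ∑ j, C (Q i j) * X ^ ((i : ℕ) + (j : ℕ))
  map_add' Q Q' := by simp only [Matrix.add_apply, C_add, add_mul, sum_add_distrib]
  map_smul' a Q := by
    simp only [Matrix.smul_apply, smul_eq_mul, C_mul, mul_assoc, ← mul_sum, RingHom.id_apply,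
      smul_eq_C_mul]

theorem gramPoly_apply (Q : Matrix (Fin n) (Fin n) R) :
    gramPoly n Q = ∑ i, ∑ j, C (Q i j) * X ^ ((i : ℕ) + (j : ℕ)) := rfl

theorem mem_GramS_iff {g : ℝ[X]} {Q : Matrix (Fin (m + 1)) (Fin (m + 1)) ℝ} :
    Q ∈ GramS m g ↔ Q.PosSemidef ∧ g = gramPoly (m + 1) Q := Iff.rfl

theorem gramPoly_single (i j : Fin n) (a : R) :
    gramPoly n (single i j a) = C a * X ^ ((i : ℕ) + (j : ℕ)) := by
  rw [gramPoly_apply, sum_eq_single i, sum_eq_single j]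
  · simp
  · intro j' _ hj
    simp [hj.symm]
  · simp
  · intro i' _ hi
    simp [Ne.symm hi]
  · simp

theorem gramPoly_vecMulVec (v : Fin n → R) :
    gramPoly n (vecMulVec v v) = (∑ i, C (v i) * X ^ (i : ℕ)) ^ 2 := by
  simp only [gramPoly_apply, sq, sum_mul_sum, vecMulVec_apply, C_mul, pow_add]
  exact sum_congr rfl fun i _ => sum_congr rfl fun j _ => by ring

theorem gramPoly_vecMulVec_coeff {p : R[X]} (hp : p.natDegree ≤ m) :
    gramPoly (m + 1) (vecMulVec (fun i => p.coeff i) (fun i => p.coeff i)) = p ^ 2 := by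
  rw [gramPoly_vecMulVec, Fin.sum_univ_eq_sum_range (fun i => C (p.coeff i) * X ^ i),
    ← p.as_sum_range_C_mul_X_pow' (Nat.lt_succ_of_le hp)]

theorem gramPoly_one :
    gramPoly n (1 : Matrix (Fin n) (Fin n) R) = ∑ i ∈ range n, X ^ (2 * i) := by
  rw [← Fin.sum_univ_eq_sum_range (fun i => (X : R[X]) ^ (2 * i)), gramPoly_apply]
  refine sum_congr rfl fun i _ => ?_
  rw [sum_eq_single i (fun j _ hj => by simp [one_apply_ne' hj]) (by simp)]
  simp [two_mul]

theorem gramPoly_mem_degreeLT (Q : Matrix (Fin (m + 1)) (Fin (m + 1)) R) :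
    gramPoly (m + 1) Q ∈ degreeLT R (2 * m + 1) := by
  rw [gramPoly_apply]
  refine Submodule.sum_mem _ fun i _ => Submodule.sum_mem _ fun j _ => mem_degreeLT.mpr <|
    (degree_C_mul_X_pow_le _ _).trans_lt ?_
  have := i.is_le
  have := j.is_le
  exact_mod_cast (by omega : (i : ℕ) + j < 2 * m + 1)

theorem natDegree_gramPoly_one [Nontrivial R] :
    (gramPoly (m + 1) (1 : Matrix (Fin (m + 1)) (Fin (m + 1)) R)).natDegree = 2 * m := by
  refine natDegree_eq_of_le_of_coeff_ne_zero ?_ ?_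
  · have := gramPoly_mem_degreeLT (1 : Matrix (Fin (m + 1)) (Fin (m + 1)) R)
    rw [degreeLT_succ_eq_degreeLE, mem_degreeLE] at this
    exact natDegree_le_iff_degree_le.mpr this
  · simp [gramPoly_one, coeff_X_pow]

theorem eval_gramPoly_one_pos (x : ℝ) :
    0 < (gramPoly (m + 1) (1 : Matrix (Fin (m + 1)) (Fin (m + 1)) ℝ)).eval x := by
  rw [gramPoly_one, eval_finsetSum, sum_range_succ']
  simp only [eval_pow, eval_X, pow_mul]
  positivity

end GramPoly

section Sym2ToMatrix

variable {R ι : Type*} [CommSemiring R]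

noncomputable def sym2ToMatrix : (Sym2 ι → R) →ₗ[R] Matrix ι ι R where
  toFun c := Matrix.of fun i j => c s(i, j)
  map_add' _ _ := rfl
  map_smul' _ _ := rfl

@[simp]
theorem sym2ToMatrix_apply (c : Sym2 ι → R) (i j : ι) : sym2ToMatrix c i j = c s(i, j) := rfl

theorem sym2ToMatrix_injective : Function.Injective (sym2ToMatrix : (Sym2 ι → R) →ₗ[R] _) := by
  intro c c' h
  funext z
  induction z using Sym2.ind with
  | _ i j => exact congr_fun₂ h i j

theorem mem_range_sym2ToMatrix_iff {B : Matrix ι ι R} :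
    B ∈ LinearMap.range sym2ToMatrix ↔ B.IsSymm := by
  constructor
  · rintro ⟨c, rfl⟩
    exact IsSymm.ext fun i j => by simp [Sym2.eq_swap]
  · intro h
    exact ⟨Sym2.lift ⟨fun i j => B i j, fun i j => (h.apply i j).symm⟩, by ext i j; simp⟩

end Sym2ToMatrix

section GramKernel

variable (K : Type*) [Field K]

/-- The symmetric Gram matrices of `0` (see `mem_gramKernel_iff`), presented as the image of a
kernel on `Sym2 (Fin (m + 1)) → K` so that rank–nullity computes its dimension. -/
noncomputable def gramKernel (m : ℕ) : Submodule K (Matrix (Fin (m + 1)) (Fin (m + 1)) K) :=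
  (LinearMap.ker ((gramPoly (m + 1)).comp sym2ToMatrix)).map sym2ToMatrix

variable {K}

theorem mem_gramKernel_iff {m : ℕ} {B : Matrix (Fin (m + 1)) (Fin (m + 1)) K} :
    B ∈ gramKernel K m ↔ B.IsSymm ∧ gramPoly (m + 1) B = 0 := by
  constructor
  · rintro ⟨c, hc, rfl⟩
    exact ⟨mem_range_sym2ToMatrix_iff.mp ⟨c, rfl⟩, hc⟩
  · rintro ⟨hs, h0⟩
    obtain ⟨c, rfl⟩ := mem_range_sym2ToMatrix_iff.mpr hs
    exact ⟨c, h0, rfl⟩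

variable [NeZero (2 : K)]

theorem range_gramPoly_comp_sym2ToMatrix (m : ℕ) :
    LinearMap.range ((gramPoly (m + 1)).comp (sym2ToMatrix (R := K))) =
      degreeLT K (2 * m + 1) := by
  classical
  refine le_antisymm (LinearMap.range_le_iff_comap.mpr ?_) ?_
  · exact Submodule.eq_top_iff'.mpr fun c => gramPoly_mem_degreeLT _
  rw [degreeLT_eq_span_X_pow, Submodule.span_le, coe_image, coe_range]
  rintro _ ⟨k, hk, rfl⟩
  rw [Set.mem_Iio] at hk
  let i : Fin (m + 1) := ⟨min k m, by omega⟩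
  let j : Fin (m + 1) := ⟨k - min k m, by omega⟩
  have hsymm : (single i j (1 / 2 : K) + single j i (1 / 2)).IsSymm := by
    rw [IsSymm, transpose_add, transpose_single, transpose_single]
    exact add_comm _ _
  obtain ⟨c, hc⟩ := mem_range_sym2ToMatrix_iff.mpr hsymm
  refine ⟨c, ?_⟩
  rw [LinearMap.comp_apply, hc, map_add, gramPoly_single, gramPoly_single, add_comm (j : ℕ),
    ← add_mul, ← C_add, add_halves, C_1, one_mul]
  congr 1
  simp only [i, j]
  omega

theorem finrank_gramKernel (m : ℕ) : Module.finrank K (gramKernel K m) = m.choose 2 := by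
  have h := ((gramPoly (m + 1)).comp (sym2ToMatrix (R := K))).finrank_range_add_finrank_ker
  rw [range_gramPoly_comp_sym2ToMatrix, (degreeLTEquiv K _).finrank_eq, Module.finrank_fin_fun,
    Module.finrank_fintype_fun_eq_card, Sym2.card, Fintype.card_fin] at h
  have hchoose : (m + 1 + 1).choose 2 = m.choose 2 + 2 * m + 1 := by
    simp [Nat.choose_succ_succ', Nat.choose_one_right]
    ring
  rw [gramKernel, ← (Submodule.equivMapOfInjective _ sym2ToMatrix_injective _).finrank_eq]
  omega

end GramKernel

theorem convex_GramS (m : ℕ) (g : ℝ[X]) : Convex ℝ (GramS m g) := by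
  rintro Q ⟨hQ, hgQ : g = gramPoly (m + 1) Q⟩ R ⟨hR, hgR : g = gramPoly (m + 1) R⟩
    a b ha hb hab
  refine mem_GramS_iff.mpr ⟨(hQ.smul ha).add (hR.smul hb), ?_⟩
  rw [map_add, map_smul, map_smul, ← hgQ, ← hgR, ← add_smul, hab, one_smul]

theorem vectorSpan_GramS_le_gramKernel (m : ℕ) (g : ℝ[X]) :
    vectorSpan ℝ (GramS m g) ≤ gramKernel ℝ m := by
  rw [vectorSpan_def, Submodule.span_le]
  rintro _ ⟨Q, ⟨hQ, hgQ : g = gramPoly (m + 1) Q⟩, R, ⟨hR, hgR : g = gramPoly (m + 1) R⟩, rfl⟩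
  refine mem_gramKernel_iff.mpr
    ⟨isHermitian_iff_isSymm.mp (hQ.isHermitian.sub hR.isHermitian), ?_⟩
  change gramPoly (m + 1) (Q - R) = 0
  rw [map_sub, ← hgQ, ← hgR, sub_self]

/-- A point `ε • 1 + S` of the spectrahedron can be moved a little in every direction
of `gramKernel`. -/
theorem gramKernel_le_vectorSpan_GramS {m : ℕ} {g : ℝ[X]} {ε : ℝ} (hε : 0 < ε)
    {S : Matrix (Fin (m + 1)) (Fin (m + 1)) ℝ} (hS : S.PosSemidef)
    (hmem : ε • 1 + S ∈ GramS m g) :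
    gramKernel ℝ m ≤ vectorSpan ℝ (GramS m g) := by
  intro B hB
  obtain ⟨hsymm, hB0⟩ := mem_gramKernel_iff.mp hB
  obtain ⟨t, ht, hpsd⟩ := (isHermitian_iff_isSymm.mpr hsymm).exists_pos_posSemidef_one_add_smul
  have hmem' : ε • 1 + S + (ε * t) • B ∈ GramS m g := by
    refine ⟨?_, ?_⟩
    · rw [add_right_comm, mul_smul, ← smul_add]
      exact (hpsd.smul hε.le).add hS
    · rw [hmem.2, ← gramPoly_apply, ← gramPoly_apply, map_add _ _ ((ε * t) • B), map_smul, hB0,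
        smul_zero, add_zero]
  have := Submodule.smul_mem _ (ε * t)⁻¹ (vsub_mem_vectorSpan ℝ hmem' hmem)
  rwa [vsub_eq_sub, add_sub_cancel_left, smul_smul, inv_mul_cancel₀ (by positivity),
    one_smul] at this

theorem exists_smul_one_add_mem_GramS {d : ℕ} {f : ℝ[X]} (hdeg : f.natDegree = 2 * d)
    (hpos : ∀ x, 0 < f.eval x) :
    ∃ ε : ℝ, 0 < ε ∧ ∃ S : Matrix (Fin (d + 1)) (Fin (d + 1)) ℝ,
      S.PosSemidef ∧ ε • 1 + S ∈ GramS d f := by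
  set σ := gramPoly (d + 1) (1 : Matrix (Fin (d + 1)) (Fin (d + 1)) ℝ)
  obtain ⟨ε, hε, hlt⟩ := exists_pos_mul_eval_lt (hdeg.trans natDegree_gramPoly_one.symm) hpos
    eval_gramPoly_one_pos
  obtain ⟨p, q, hpq⟩ := exists_eq_sq_add_sq_of_forall_eval_pos (f := f - C ε * σ)
    fun x => by simpa using hlt x
  have hdeg' : (f - C ε * σ).natDegree ≤ 2 * d :=
    (natDegree_sub_le _ _).trans (max_le hdeg.le
      ((natDegree_C_mul_le _ _).trans natDegree_gramPoly_one.le))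
  have hp : 2 * p.natDegree ≤ 2 * d :=
    (two_mul_natDegree_le_natDegree_sq_add_sq p q).trans (by rwa [← hpq])
  have hq : 2 * q.natDegree ≤ 2 * d :=
    (two_mul_natDegree_le_natDegree_sq_add_sq q p).trans (by rwa [add_comm, ← hpq])
  let vp : Fin (d + 1) → ℝ := fun i => p.coeff i
  let vq : Fin (d + 1) → ℝ := fun i => q.coeff i
  have hS : (vecMulVec vp vp + vecMulVec vq vq).PosSemidef := by
    simpa using (posSemidef_vecMulVec_self_star vp).add (posSemidef_vecMulVec_self_star vq)
  refine ⟨ε, hε, _, hS, mem_GramS_iff.mpr ⟨(PosSemidef.one.smul hε.le).add hS, ?_⟩⟩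
  rw [map_add, map_add, map_smul, gramPoly_vecMulVec_coeff (by omega),
    gramPoly_vecMulVec_coeff (by omega), ← hpq, smul_eq_C_mul]
  ring

/-- For a univariate real polynomial `f` of degree `2d` that is strictly positive
on `ℝ`, the Gram spectrahedron of `f` is convex and its affine span has dimension
`C(d, 2) = d(d−1)/2`. -/
theorem stmt_5 (d : ℕ) (f : Polynomial ℝ) (hdeg : f.natDegree = 2 * d)
    (hpos : ∀ x : ℝ, 0 < f.eval x) :
    Convex ℝ (GramS d f) ∧
    Module.finrank ℝ (affineSpan ℝ (GramS d f)).direction = d.choose 2 := by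
  obtain ⟨ε, hε, S, hS, hmem⟩ := exists_smul_one_add_mem_GramS hdeg hpos
  refine ⟨convex_GramS d f, ?_⟩
  rw [direction_affineSpan, (vectorSpan_GramS_le_gramKernel d f).antisymm
    (gramKernel_le_vectorSpan_GramS hε hS hmem), finrank_gramKernel]
end

section
/- Let f be a univariate real polynomial and a, b ∈ ℝ with a ≠ 0. Then f is a sum of squares of polynomials if and only if (ax+b)²·f is a sum of squares of polynomials. -/
/-!
At the root `r = -b/a` of `ax + b`, the sum `∑ qᵢ²` vanishes, and a sum of real squares vanishes
only if every term does. So each `qᵢ` is divisible by `x - r`, and cancelling `(x - r)²` exhibits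
`a² f` as a sum of squares of the quotients.
-/

open Polynomial Finset

section SumOfSquares

variable {R : Type*} {ι : Type*}

theorem sq_mul_sum_sq [CommSemiring R] (s : Finset ι) (c : R) (q : ι → R) :
    c ^ 2 * ∑ i ∈ s, q i ^ 2 = ∑ i ∈ s, (c * q i) ^ 2 := by
  simp only [Finset.mul_sum, mul_pow]

variable [CommRing R] [LinearOrder R] [IsStrictOrderedRing R]

theorem Polynomial.IsRoot.of_sum_sq {s : Finset ι} {q : ι → R[X]} {r : R}
    (h : (∑ i ∈ s, q i ^ 2).IsRoot r) {i : ι} (hi : i ∈ s) : (q i).IsRoot r := by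
  have hsum : ∑ j ∈ s, (q j).eval r ^ 2 = 0 := by simpa [eval_finsetSum] using h
  exact pow_eq_zero_iff two_ne_zero |>.mp <|
    (Finset.sum_eq_zero_iff_of_nonneg fun j _ => sq_nonneg _).mp hsum i hi

theorem exists_sum_sq_of_X_sub_C_sq_mul_eq_sum_sq {m : ℕ} {g : R[X]} {r : R}
    {q : Fin m → R[X]} (h : (X - C r) ^ 2 * g = ∑ i, q i ^ 2) :
    ∃ p : Fin m → R[X], g = ∑ i, p i ^ 2 := by
  have hroot : (∑ i, q i ^ 2).IsRoot r := by simp [← h]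
  choose p hp using fun i => dvd_iff_isRoot.mpr (hroot.of_sum_sq (mem_univ i))
  refine ⟨p, mul_left_cancel₀ (pow_ne_zero 2 (X_sub_C_ne_zero r)) ?_⟩
  rw [h, sq_mul_sum_sq]
  exact Finset.sum_congr rfl fun i _ => by rw [hp i]

end SumOfSquares

theorem Polynomial.C_mul_X_add_C_eq {K : Type*} [Field K] {a : K} (ha : a ≠ 0) (b : K) :
    C a * X + C b = C a * (X - C (-b / a)) := by
  rw [mul_sub, ← C_mul, mul_div_cancel₀ _ ha, C_neg, sub_neg_eq_add]

/-- For a univariate real polynomial `f` and reals `a ≠ 0`, `b`, the polynomial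
`f` is a sum of squares of polynomials if and only if `(ax + b)² · f` is. -/
theorem stmt_8 (f : Polynomial ℝ) (a b : ℝ) (ha : a ≠ 0) :
    (∃ (m : ℕ) (q : Fin m → Polynomial ℝ), f = ∑ i, q i ^ 2) ↔
    (∃ (m : ℕ) (q : Fin m → Polynomial ℝ),
        (C a * X + C b) ^ 2 * f = ∑ i, q i ^ 2) := by
  constructor
  · rintro ⟨m, q, rfl⟩
    exact ⟨m, _, sq_mul_sum_sq _ _ q⟩
  · rintro ⟨m, q, hq⟩
    rw [C_mul_X_add_C_eq ha, mul_pow, mul_assoc, mul_left_comm] at hq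
    obtain ⟨p, hp⟩ := exists_sum_sq_of_X_sub_C_sq_mul_eq_sum_sq hq
    refine ⟨m, fun i => C a⁻¹ * p i, ?_⟩
    rw [← sq_mul_sum_sq, ← hp, ← mul_assoc, ← mul_pow, ← C_mul, inv_mul_cancel₀ ha, C_1, one_pow,
      one_mul]
end

section
/- Let f be a univariate real polynomial, let a, b ∈ ℝ with a ≠ 0, and suppose (ax+b)²·f(x) = Σᵢ qᵢ(x)² for real polynomials qᵢ. Then every qᵢ vanishes at the root r = −b/a of ax+b, and f(x) = Σᵢ (qᵢ(x)/(ax+b))², where each qᵢ(x)/(ax+b) is a polynomial. -/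
open Polynomial Finset

/-- If `(ax + b)² · f = ∑ᵢ qᵢ²` with `a ≠ 0`, then every `qᵢ` vanishes at the
root `r = −b/a` of `ax + b`, each `qᵢ` is divisible by `ax + b` (say `qᵢ = (ax + b) · pᵢ`,
so `pᵢ = qᵢ/(ax+b)` is a polynomial), and `f = ∑ᵢ (qᵢ/(ax+b))²`. -/
theorem stmt_9 (f : Polynomial ℝ) (a b : ℝ) (ha : a ≠ 0)
    (m : ℕ) (q : Fin m → Polynomial ℝ)
    (hrep : (C a * X + C b) ^ 2 * f = ∑ i, q i ^ 2) :
    (∀ i, (q i).eval (-b / a) = 0) ∧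
    ∃ p : Fin m → Polynomial ℝ,
      (∀ i, q i = (C a * X + C b) * p i) ∧ f = ∑ i, p i ^ 2 := by
  set r : ℝ := -b / a with hr
  have hroot : a * r + b = 0 := by rw [hr]; field_simp; ring
  have heval : (∑ i, (q i).eval r ^ 2) = 0 := by
    have := congrArg (Polynomial.eval r) hrep
    simpa [eval_finset_sum, hroot] using this.symm
  have hq0 : ∀ i, (q i).eval r = 0 := by
    intro i
    have h := (Finset.sum_eq_zero_iff_of_nonneg (fun j _ => sq_nonneg ((q j).eval r))).1
      heval i (Finset.mem_univ i)
    exact pow_eq_zero_iff (n := 2) (by norm_num) |>.1 h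
  refine ⟨hq0, ?_⟩
  have hfac : C a * X + C b = C a * (X - C r) := by
    rw [mul_sub, ← C_mul]
    have : a * r = -b := by
      have := hroot; linarith
    rw [this]
    ring_nf
    simp [map_neg, sub_eq_add_neg]
  have hdvd : ∀ i, (C a * X + C b) ∣ q i := by
    intro i
    rw [hfac]
    obtain ⟨c, hc⟩ := dvd_iff_isRoot.2 (hq0 i)
    refine ⟨C a⁻¹ * c, ?_⟩
    rw [hc, show C a * (X - C r) * (C a⁻¹ * c) = (C a * C a⁻¹) * ((X - C r) * c) by ring,
      ← C_mul, mul_inv_cancel₀ ha]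
    simp
  choose p hp using hdvd
  refine ⟨p, hp, ?_⟩
  have hL : (C a * X + C b) ^ 2 ≠ 0 := by
    apply pow_ne_zero
    intro h
    have := congrArg (fun p => Polynomial.coeff p 1) h
    simp at this
    exact ha this
  apply mul_left_cancel₀ hL
  rw [hrep, Finset.mul_sum]
  congr 1
  funext i
  rw [hp i]
  ring
end
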